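/- arXiv:1605.09534 — 4 statements merged into one kernel-verified Lean document; each statement's English description precedes it below -/
import Mathlib

section
/- A ring R is uniquely nil clean if and only if R is conjugate nil clean and all idempotents of R are central. -/
/-!
If every element has a unique nil clean decomposition, then for an idempotent `e` and any `r`
the square-zero elements `x = e r (1 - e)` and `x = (1 - e) r e` make `e + x` idempotent, so
`e + x` has the two nil clean decompositions `e + x` and `(e + x) + 0`, and uniqueness forces
`x = 0`; together these say `e r = e r e = r e`. Conversely, a unit conjugate of a central idempotent is that idempotent
itself, so conjugate idempotents coincide and the nilpotent parts then agree by cancellation.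
-/

/-- Two idempotents are conjugate by a unit. -/
def ConjugateIdem {R : Type*} [Ring R] (e f : R) : Prop := ∃ u : Rˣ, e = u * f * ↑u⁻¹

/-- `a` is nil clean: a sum of an idempotent and a nilpotent. -/
def IsNilCleanElem {R : Type*} [Ring R] (a : R) : Prop :=
  ∃ e n : R, IsIdempotentElem e ∧ IsNilpotent n ∧ a = e + n

/-- `a` is conjugate nil clean. -/
def IsConjNilCleanElem {R : Type*} [Ring R] (a : R) : Prop :=
  IsNilCleanElem a ∧ ∀ e n f m : R, IsIdempotentElem e → IsNilpotent n → a = e + n →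
    IsIdempotentElem f → IsNilpotent m → a = f + m → ConjugateIdem e f

section

variable {R : Type*} [Ring R]

def IsUniquelyNilCleanElem (a : R) : Prop :=
  IsNilCleanElem a ∧ ∀ e n f m : R, IsIdempotentElem e → IsNilpotent n → a = e + n →
    IsIdempotentElem f → IsNilpotent m → a = f + m → e = f ∧ n = m

theorem IsIdempotentElem.add_of_mul_self_eq_zero {e x : R} (he : IsIdempotentElem e)
    (hx : x * x = 0) (hex : e * x + x * e = x) : IsIdempotentElem (e + x) := by
  rw [IsIdempotentElem, add_mul, mul_add, mul_add, he.eq, hx, add_zero, add_assoc, hex]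

theorem IsIdempotentElem.mul_mul_one_sub_sq {e : R} (he : IsIdempotentElem e) (r : R) :
    e * r * (1 - e) * (e * r * (1 - e)) = 0 := by
  simp only [mul_assoc, ← mul_assoc (1 - e) e, he.one_sub_mul_self, zero_mul, mul_zero]

theorem IsIdempotentElem.one_sub_mul_mul_sq {e : R} (he : IsIdempotentElem e) (r : R) :
    (1 - e) * r * e * ((1 - e) * r * e) = 0 := by
  simp only [mul_assoc, ← mul_assoc e (1 - e), he.mul_one_sub_self, zero_mul, mul_zero]

theorem IsIdempotentElem.add_mul_mul_one_sub {e : R} (he : IsIdempotentElem e) (r : R) :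
    IsIdempotentElem (e + e * r * (1 - e)) :=
  he.add_of_mul_self_eq_zero (he.mul_mul_one_sub_sq r) <| by
    simp only [← mul_assoc, he.eq, mul_assoc _ (1 - e) e, he.one_sub_mul_self, mul_zero,
      add_zero]

theorem IsIdempotentElem.add_one_sub_mul_mul {e : R} (he : IsIdempotentElem e) (r : R) :
    IsIdempotentElem (e + (1 - e) * r * e) :=
  he.add_of_mul_self_eq_zero (he.one_sub_mul_mul_sq r) <| by
    simp only [← mul_assoc, he.mul_one_sub_self, zero_mul, zero_add, mul_assoc _ e e, he.eq]

theorem commute_of_mul_mul_one_sub_eq_zero {e r : R}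
    (h₁ : e * r * (1 - e) = 0) (h₂ : (1 - e) * r * e = 0) : Commute e r := by
  rw [mul_one_sub, sub_eq_zero] at h₁
  rw [mul_assoc, one_sub_mul, sub_eq_zero, ← mul_assoc] at h₂
  exact h₁.trans h₂.symm

theorem IsUniquelyNilCleanElem.eq_zero_of_add {e x : R} (h : IsUniquelyNilCleanElem (e + x))
    (he : IsIdempotentElem e) (hx : x * x = 0) (hex : IsIdempotentElem (e + x)) : x = 0 :=
  left_eq_add.mp (h.2 e x (e + x) 0 he ⟨2, by rw [sq, hx]⟩ rfl hex .zero (add_zero _).symm).1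

theorem IsUniquelyNilCleanElem.isConjNilCleanElem {a : R} (h : IsUniquelyNilCleanElem a) :
    IsConjNilCleanElem a :=
  ⟨h.1, fun e n f m he hn hen hf hm hfm ↦ ⟨1, by simp [(h.2 e n f m he hn hen hf hm hfm).1]⟩⟩

theorem ConjugateIdem.eq_of_forall_commute {e f : R} (h : ConjugateIdem e f)
    (hf : ∀ r, Commute f r) : e = f := by
  obtain ⟨u, rfl⟩ := h
  rw [← (hf u).eq, mul_assoc, Units.mul_inv, mul_one]

theorem IsConjNilCleanElem.isUniquelyNilCleanElem {a : R} (h : IsConjNilCleanElem a)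
    (hcent : ∀ e : R, IsIdempotentElem e → ∀ r, Commute e r) : IsUniquelyNilCleanElem a := by
  refine ⟨h.1, fun e n f m he hn hen hf hm hfm ↦ ?_⟩
  obtain rfl : e = f := (h.2 e n f m he hn hen hf hm hfm).eq_of_forall_commute (hcent f hf)
  exact ⟨rfl, add_left_cancel (hen.symm.trans hfm)⟩

theorem IsIdempotentElem.commute_of_forall_isUniquelyNilCleanElem
    (h : ∀ a : R, IsUniquelyNilCleanElem a) {e : R} (he : IsIdempotentElem e) (r : R) :
    Commute e r :=
  commute_of_mul_mul_one_sub_eq_zero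
    ((h _).eq_zero_of_add he (he.mul_mul_one_sub_sq r) (he.add_mul_mul_one_sub r))
    ((h _).eq_zero_of_add he (he.one_sub_mul_mul_sq r) (he.add_one_sub_mul_mul r))

end

/-- `R` is uniquely nil clean iff it is conjugate nil clean and all idempotents are
central. -/
theorem uniquelyNilClean_iff_conjNilClean_and_idem_central {R : Type*} [Ring R] :
    (∀ a : R, IsNilCleanElem a ∧
      ∀ e n f m : R, IsIdempotentElem e → IsNilpotent n → a = e + n →
        IsIdempotentElem f → IsNilpotent m → a = f + m → e = f ∧ n = m) ↔
    ((∀ a : R, IsConjNilCleanElem a) ∧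
      ∀ e : R, IsIdempotentElem e → ∀ r : R, e * r = r * e) := by
  change (∀ a : R, IsUniquelyNilCleanElem a) ↔ _
  refine ⟨fun h ↦ ⟨fun a ↦ (h a).isConjNilCleanElem,
    fun e he r ↦ (he.commute_of_forall_isUniquelyNilCleanElem h r).eq⟩, ?_⟩
  rintro ⟨hconj, hcent⟩ a
  exact (hconj a).isUniquelyNilCleanElem hcent
end

section
/- Let I be an ideal of R contained in J(R) such that idempotents lift modulo I. Then R is conjugate clean if and only if R/I is conjugate clean. -/
/-- `a` is clean: a sum of an idempotent and a unit. -/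
def IsCleanElem {R : Type*} [Ring R] (a : R) : Prop :=
  ∃ e u : R, IsIdempotentElem e ∧ IsUnit u ∧ a = e + u

/-- `a` is conjugate clean. -/
def IsConjCleanElem {R : Type*} [Ring R] (a : R) : Prop :=
  IsCleanElem a ∧ ∀ e u f v : R, IsIdempotentElem e → IsUnit u → a = e + u →
    IsIdempotentElem f → IsUnit v → a = f + v → ConjugateIdem e f

/-!
Units lift along `R → R/I` because `I ⊆ J(R)`, and idempotents lift by hypothesis, so clean
decompositions of `a` and of its image correspond, and conjugacy of idempotents passes to the
quotient. Conversely, a unit conjugating the images of `e` and `f` lifts to a unit `t` of `R`; then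
`e` and `t f t⁻¹` are idempotents congruent modulo `J(R)`, and two such idempotents `e, g` are
conjugate by `e g + (1 - e)(1 - g)`, a unit since it is `1` modulo `J(R)`.
-/

theorem isUnit_of_mul_eq_one_of_mul_eq_one {M : Type*} [Monoid M] {a b c : M}
    (hab : a * b = 1) (hca : c * a = 1) : IsUnit a :=
  isUnit_iff_exists.2 ⟨b, hab, left_inv_eq_right_inv hca hab ▸ hca⟩

theorem IsIdempotentElem.of_isConj {M : Type*} [Monoid M] {e f : M} (he : IsIdempotentElem e)
    (h : IsConj e f) : IsIdempotentElem f := by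
  obtain ⟨c, hc⟩ := h
  have hf : f = c * e * ↑c⁻¹ := by rw [hc.eq, mul_assoc, Units.mul_inv, mul_one]
  rw [hf, IsIdempotentElem]
  calc c * e * ↑c⁻¹ * (c * e * ↑c⁻¹) = c * (e * e) * ↑c⁻¹ := by
        simp only [mul_assoc, Units.inv_mul_cancel_left]
    _ = c * e * ↑c⁻¹ := by rw [he.eq]

theorem conjugateIdem_iff_isConj {R : Type*} [Ring R] {e f : R} :
    ConjugateIdem e f ↔ IsConj f e := by
  simp only [ConjugateIdem, IsConj, SemiconjBy, Units.eq_mul_inv_iff_mul_eq, eq_comm]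

section Jacobson

variable {R : Type*} [Ring R]

theorem isUnit_of_sub_one_mem_jacobson_bot {r : R} (h : r - 1 ∈ Ideal.jacobson (⊥ : Ideal R)) :
    IsUnit r := by
  obtain ⟨s, hsr⟩ := Ideal.exists_mul_sub_mem_of_sub_one_mem_jacobson r h
  rw [Ideal.mem_bot, sub_eq_zero] at hsr
  have hs : s - 1 ∈ Ideal.jacobson (⊥ : Ideal R) := by
    have : s - 1 = -s * (r - 1) := by rw [neg_mul, mul_sub, hsr, mul_one, neg_sub]
    exact this ▸ Ideal.mul_mem_left _ _ h
  obtain ⟨t, hts⟩ := Ideal.exists_mul_sub_mem_of_sub_one_mem_jacobson s hs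
  rw [Ideal.mem_bot, sub_eq_zero] at hts
  exact isUnit_of_mul_eq_one_of_mul_eq_one (left_inv_eq_right_inv hts hsr ▸ hts) hsr

theorem IsIdempotentElem.isConj_of_sub_mem_jacobson_bot {e f : R} (he : IsIdempotentElem e)
    (hf : IsIdempotentElem f) (h : e - f ∈ Ideal.jacobson (⊥ : Ideal R)) : IsConj f e := by
  have hu : e * f + (1 - e) * (1 - f) - 1 = (1 - 2 * e) * (e - f) := by
    rw [show (1 - 2 * e) * (e - f) = e - f - 2 * (e * e) + 2 * (e * f) by noncomm_ring, he.eq]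
    noncomm_ring
  obtain ⟨u, hu⟩ := isUnit_of_sub_one_mem_jacobson_bot (hu ▸ Ideal.mul_mem_left _ _ h)
  refine ⟨u, ?_⟩
  rw [SemiconjBy, hu]
  simp only [mul_add, add_mul, mul_sub, sub_mul, one_mul, mul_one, mul_assoc, he.eq, hf.eq]
  simp only [← mul_assoc, he.eq]
  abel

end Jacobson

section RingHom

variable {R S : Type*} [Ring R] [Ring S] (π : R →+* S)

def LiftsIdempotents : Prop :=
  ∀ b : S, IsIdempotentElem b → ∃ e : R, IsIdempotentElem e ∧ π e = b

theorem isLocalHom_of_surjective_of_ker_le_jacobson_bot (hπ : Function.Surjective π)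
    (hker : RingHom.ker π ≤ Ideal.jacobson (⊥ : Ideal R)) : IsLocalHom π := by
  refine ⟨fun a ⟨c, hc⟩ => ?_⟩
  obtain ⟨b, hb⟩ := hπ ↑c⁻¹
  have hunit : ∀ x, π x = 1 → IsUnit x := fun x hx =>
    isUnit_of_sub_one_mem_jacobson_bot <| hker <| by
      rw [RingHom.mem_ker, map_sub, hx, map_one, sub_self]
  obtain ⟨u, hu⟩ := hunit (a * b) (by rw [map_mul, hb, ← hc, Units.mul_inv])
  obtain ⟨v, hv⟩ := hunit (b * a) (by rw [map_mul, hb, ← hc, Units.inv_mul])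
  refine isUnit_of_mul_eq_one_of_mul_eq_one (b := b * ↑u⁻¹) (c := ↑v⁻¹ * b) ?_ ?_
  · rw [← mul_assoc, ← hu, Units.mul_inv]
  · rw [mul_assoc, ← hv, Units.inv_mul]

theorem Units.exists_map_eq_of_surjective [IsLocalHom π] (hπ : Function.Surjective π) (c : Sˣ) :
    ∃ t : Rˣ, Units.map π t = c := by
  obtain ⟨a, ha⟩ := hπ c
  obtain ⟨t, rfl⟩ := isUnit_of_map_unit π a (ha ▸ c.isUnit)
  exact ⟨t, Units.ext ha⟩

variable {π}

theorem IsCleanElem.map {a : R} (h : IsCleanElem a) : IsCleanElem (π a) := by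
  obtain ⟨e, u, he, hu, rfl⟩ := h
  exact ⟨π e, π u, he.map π, hu.map π, map_add π e u⟩

theorem ConjugateIdem.map {e f : R} (h : ConjugateIdem e f) : ConjugateIdem (π e) (π f) :=
  conjugateIdem_iff_isConj.2 (MonoidHom.map_isConj (π : R →* S) (conjugateIdem_iff_isConj.1 h))

theorem LiftsIdempotents.exists_isUnit_sub [IsLocalHom π] (hlift : LiftsIdempotents π) (a : R)
    {b u : S} (hb : IsIdempotentElem b) (hu : IsUnit u) (hab : π a = b + u) :
    ∃ e : R, IsIdempotentElem e ∧ π e = b ∧ IsUnit (a - e) := by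
  obtain ⟨e, he, rfl⟩ := hlift b hb
  refine ⟨e, he, rfl, isUnit_of_map_unit π _ ?_⟩
  rwa [map_sub, hab, add_sub_cancel_left]

theorem LiftsIdempotents.isConjCleanElem_of_forall_domain [IsLocalHom π]
    (hlift : LiftsIdempotents π) (hπ : Function.Surjective π) (H : ∀ a : R, IsConjCleanElem a)
    (b : S) : IsConjCleanElem b := by
  obtain ⟨a, rfl⟩ := hπ b
  refine ⟨(H a).1.map, fun e' u' f' v' he' hu' hae' hf' hv' haf' => ?_⟩
  obtain ⟨e, he, rfl, hu⟩ := hlift.exists_isUnit_sub a he' hu' hae'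
  obtain ⟨f, hf, rfl, hv⟩ := hlift.exists_isUnit_sub a hf' hv' haf'
  exact ((H a).2 e _ f _ he hu (add_sub_cancel e a).symm hf hv (add_sub_cancel f a).symm).map

theorem LiftsIdempotents.isConjCleanElem_of_forall_codomain
    (hlift : LiftsIdempotents π) (hπ : Function.Surjective π)
    (hker : RingHom.ker π ≤ Ideal.jacobson (⊥ : Ideal R)) (H : ∀ b : S, IsConjCleanElem b)
    (a : R) : IsConjCleanElem a := by
  have := isLocalHom_of_surjective_of_ker_le_jacobson_bot π hπ hker
  obtain ⟨⟨e', u', he', hu', hae'⟩, hconj⟩ := H (π a)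
  refine ⟨?_, fun e u f v he hu hae hf hv haf => ?_⟩
  · obtain ⟨e, he, -, hu⟩ := hlift.exists_isUnit_sub a he' hu' hae'
    exact ⟨e, a - e, he, hu, (add_sub_cancel e a).symm⟩
  obtain ⟨c, hc⟩ := conjugateIdem_iff_isConj.1 <| hconj (π e) (π u) (π f) (π v)
    (he.map π) (hu.map π) (by rw [hae, map_add]) (hf.map π) (hv.map π) (by rw [haf, map_add])
  obtain ⟨t, rfl⟩ := Units.exists_map_eq_of_surjective π hπ c
  have hfg : IsConj f (t * f * ↑t⁻¹) := ⟨t, by rw [SemiconjBy, Units.inv_mul_cancel_right]⟩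
  have hmap : π (t * f * ↑t⁻¹) = π e := by
    rw [map_mul, map_mul, show π t * π f = π e * π t from hc, mul_assoc, ← map_mul,
      Units.mul_inv, map_one, mul_one]
  have hge : IsConj (t * f * ↑t⁻¹) e := he.isConj_of_sub_mem_jacobson_bot (hf.of_isConj hfg) <|
    hker <| by rw [RingHom.mem_ker, map_sub, hmap, sub_self]
  exact conjugateIdem_iff_isConj.2 (hfg.trans hge)

theorem LiftsIdempotents.forall_isConjCleanElem_iff (hlift : LiftsIdempotents π)
    (hπ : Function.Surjective π) (hker : RingHom.ker π ≤ Ideal.jacobson (⊥ : Ideal R)) :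
    (∀ a : R, IsConjCleanElem a) ↔ ∀ b : S, IsConjCleanElem b :=
  have := isLocalHom_of_surjective_of_ker_le_jacobson_bot π hπ hker
  ⟨hlift.isConjCleanElem_of_forall_domain hπ,
    hlift.isConjCleanElem_of_forall_codomain hπ hker⟩

end RingHom

/-- If `I ⊆ J(R)` and idempotents lift modulo `I`, then `R` is conjugate clean iff
`R/I` is conjugate clean. -/
theorem conjClean_iff_quotient_conjClean {R : Type*} [Ring R] (I : TwoSidedIdeal R)
    (hI : ∀ x ∈ I, x ∈ Ideal.jacobson (⊥ : Ideal R))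
    (hlift : ∀ a : R, a ^ 2 - a ∈ I → ∃ e : R, IsIdempotentElem e ∧ e - a ∈ I) :
    (∀ a : R, IsConjCleanElem a) ↔ (∀ b : I.ringCon.Quotient, IsConjCleanElem b) := by
  have hmem : ∀ x, I.ringCon.mk' x = 0 ↔ x ∈ I := fun x => by
    rw [← TwoSidedIdeal.mem_ker, TwoSidedIdeal.ker_ringCon_mk']
  have hlift' : LiftsIdempotents I.ringCon.mk' := by
    intro b hb
    obtain ⟨x, rfl⟩ := I.ringCon.mk'_surjective b
    obtain ⟨e, he, hex⟩ := hlift x <| (hmem _).1 <| by rw [map_sub, map_pow, sq, hb.eq, sub_self]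
    exact ⟨e, he, sub_eq_zero.1 <| by rw [← map_sub, hmem]; exact hex⟩
  exact hlift'.forall_isConjCleanElem_iff I.ringCon.mk'_surjective
    fun x hx => hI x ((hmem x).1 hx)
end

section
/- For any ring R and any n ≥ 3, the matrix ring Mₙ(R) is not conjugate nil clean. -/
/-!
In a nil clean ring `2` is nilpotent: if `-1 = e + q`, the idempotent `e = -(1 + q)` is a unit,
so `e = 1` and `2 = -q`. In `M₃(R)` the nonzero idempotent `E = idem₃` and the nilpotent
`N = nil₃` satisfy `(E + N)³ = 2C`, so `E + N` is nilpotent as soon as `2` is, and then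
`E + N = 0 + (E + N)` is a second nil clean decomposition; conjugacy of `E` with `0` forces
`E = 0`. For `n ≥ 3` the same happens in the upper left `3 × 3` corner of `Mₙ(R)`.
-/

section RingTheory

variable {R : Type*} [Ring R]

theorem eq_zero_of_conjugateIdem_zero {f : R} (h : ConjugateIdem 0 f) : f = 0 := by
  obtain ⟨u, hu⟩ := h
  rwa [eq_comm, Units.mul_left_eq_zero, Units.mul_right_eq_zero] at hu

theorem isNilpotent_two_of_isNilCleanElem_neg_one (h : IsNilCleanElem (-1 : R)) :
    IsNilpotent (2 : R) := by
  obtain ⟨e, q, he, hq, hsum⟩ := h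
  have hunit : IsUnit e := by
    have he_eq : e = -(1 + q) := by rw [neg_add, hsum]; abel
    exact he_eq ▸ hq.isUnit_one_add.neg
  have he1 : e = 1 := (IsIdempotentElem.iff_eq_one_of_isUnit hunit).1 he
  have htwo : (2 : R) = -q := by
    rw [he1] at hsum
    rw [eq_neg_iff_add_eq_zero, ← one_add_one_eq_two, add_assoc, ← hsum, add_neg_cancel]
  exact htwo ▸ hq.neg

theorem IsConjNilCleanElem.eq_zero_of_isNilpotent {a e m : R} (ha : IsConjNilCleanElem a)
    (hnil : IsNilpotent a) (he : IsIdempotentElem e) (hm : IsNilpotent m) (hsum : a = e + m) :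
    e = 0 :=
  eq_zero_of_conjugateIdem_zero <|
    ha.2 0 a e m IsIdempotentElem.zero hnil (zero_add a).symm he hm hsum

theorem not_forall_isConjNilCleanElem_of_pow_eq_two_mul {f m c : R} (hf : IsIdempotentElem f)
    (hf0 : f ≠ 0) (hm : IsNilpotent m) {k : ℕ} (hk : (f + m) ^ k = 2 * c) :
    ¬ ∀ a : R, IsConjNilCleanElem a := by
  intro h
  have htwo : IsNilpotent (2 : R) := isNilpotent_two_of_isNilCleanElem_neg_one (h (-1)).1
  have hfm : IsNilpotent (f + m) := by
    obtain ⟨j, hj⟩ := (Commute.ofNat_left 2 c).isNilpotent_mul_right htwo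
    exact ⟨k * j, by rw [pow_mul, hk, hj]⟩
  exact hf0 ((h (f + m)).eq_zero_of_isNilpotent hfm hf hm rfl)

end RingTheory

namespace Matrix

theorem fromBlocks_zero_pow {α m κ : Type*} [Semiring α] [Fintype m] [DecidableEq m] [Fintype κ]
    [DecidableEq κ] (A : Matrix m m α) {k : ℕ} (hk : k ≠ 0) :
    fromBlocks A 0 0 (0 : Matrix κ κ α) ^ k = fromBlocks (A ^ k) 0 0 0 := by
  rw [fromBlocks_diagonal_pow, zero_pow hk]

variable (R : Type*) [Ring R]

def idem₃ : Matrix (Fin 3) (Fin 3) R := !![0, -1, -1; 0, 1, 0; 0, 0, 1]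
def nil₃ : Matrix (Fin 3) (Fin 3) R := !![0, 0, 0; 0, 0, 1; 1, 0, 0]
def halfCube₃ : Matrix (Fin 3) (Fin 3) R := !![-1, 0, -1; 1, 0, 1; 0, -1, -1]

variable {R}

theorem isIdempotentElem_idem₃ : IsIdempotentElem (idem₃ R) := by
  simp [IsIdempotentElem, idem₃]

theorem nil₃_pow_three : nil₃ R ^ 3 = 0 := by
  ext i j; fin_cases i <;> fin_cases j <;> simp [pow_three, nil₃]

theorem idem₃_add_nil₃_pow_three : (idem₃ R + nil₃ R) ^ 3 = 2 * halfCube₃ R := by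
  rw [two_mul, pow_three]
  ext i j; fin_cases i <;> fin_cases j <;> simp [idem₃, nil₃, halfCube₃]

theorem idem₃_ne_zero [Nontrivial R] : idem₃ R ≠ 0 := fun h => by
  simpa [idem₃] using congr_fun₂ h 1 1

theorem exists_idempotent_nilpotent_add_pow_three_eq_two_mul [Nontrivial R] {n : ℕ}
    (hn : 3 ≤ n) : ∃ f m c : Matrix (Fin n) (Fin n) R,
      IsIdempotentElem f ∧ f ≠ 0 ∧ IsNilpotent m ∧ (f + m) ^ 3 = 2 * c := by
  let φ := reindexRingEquiv R (finSumFinEquiv.trans (finCongr (by omega : 3 + (n - 3) = n)))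
  let corner (A : Matrix (Fin 3) (Fin 3) R) := φ (fromBlocks A 0 0 0)
  refine ⟨corner (idem₃ R), corner (nil₃ R), corner (halfCube₃ R), ?_, ?_, ?_, ?_⟩
  · refine IsIdempotentElem.map ?_ φ
    rw [IsIdempotentElem, ← pow_two, fromBlocks_zero_pow _ two_ne_zero, pow_two,
      isIdempotentElem_idem₃.eq]
  · simpa [corner, ← fromBlocks_zero, fromBlocks_inj] using idem₃_ne_zero
  · refine IsNilpotent.map ⟨3, ?_⟩ φ
    rw [fromBlocks_zero_pow _ three_ne_zero, nil₃_pow_three, fromBlocks_zero]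
  · have hcube : (fromBlocks (idem₃ R) 0 0 0 + fromBlocks (nil₃ R) 0 0 0) ^ 3 =
        2 * fromBlocks (halfCube₃ R) 0 0 (0 : Matrix (Fin (n - 3)) (Fin (n - 3)) R) := by
      rw [two_mul, fromBlocks_add, fromBlocks_add]
      simp only [add_zero]
      rw [fromBlocks_zero_pow _ three_ne_zero, idem₃_add_nil₃_pow_three, two_mul]
    simpa only [map_add, map_pow, map_mul, map_ofNat] using congrArg φ hcube

end Matrix

/-- For any (nontrivial) ring `R` and `n ≥ 3`, `Mₙ(R)` is not conjugate nil clean. -/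
theorem matrix_not_conjNilClean (R : Type*) [Ring R] [Nontrivial R] (n : ℕ) (hn : 3 ≤ n) :
    ¬ ∀ a : Matrix (Fin n) (Fin n) R, IsConjNilCleanElem a := by
  obtain ⟨f, m, c, hf, hf0, hm, hcube⟩ :=
    Matrix.exists_idempotent_nilpotent_add_pow_three_eq_two_mul (R := R) hn
  exact not_forall_isConjNilCleanElem_of_pow_eq_two_mul hf hf0 hm hcube
end

section
/- Let R be a ring in which the set N(R) of nilpotent elements is an ideal. If R is nil clean, then R is conjugate nil clean. -/
/-!
Two decompositions `a = e + n = f + m` give `e - f = m - n`, which is nilpotent because the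
nilpotents form an ideal. For idempotents `e, f` the element `u = e f + (1 - e)(1 - f)`
intertwines them, `e u = e f = u f`, and `u = 1 - (e (e - f) - (e - f) f)` is `1` minus an
element of the ideal generated by `e - f`, hence a unit; so `e = u f u⁻¹`.
-/

section

variable {R : Type*} [Ring R]

theorem conjugateIdem_of_mul_eq_mul {e f : R} (u : Rˣ) (h : e * u = u * f) :
    ConjugateIdem e f :=
  ⟨u, by rw [← h, Units.mul_inv_cancel_right]⟩

theorem IsIdempotentElem.mul_intertwiner_eq_intertwiner_mul {e f : R} (he : IsIdempotentElem e)
    (hf : IsIdempotentElem f) :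
    e * (e * f + (1 - e) * (1 - f)) = (e * f + (1 - e) * (1 - f)) * f := by
  have hef : e * (e * f + (1 - e) * (1 - f)) = e * f := by
    simp only [mul_add, ← mul_assoc, mul_sub, mul_one, he.eq, sub_self, zero_mul, add_zero]
  have hfe : (e * f + (1 - e) * (1 - f)) * f = e * f := by
    simp only [add_mul, mul_assoc, sub_mul, one_mul, hf.eq, sub_self, mul_zero, add_zero]
  rw [hef, hfe]

theorem IsIdempotentElem.intertwiner_eq_one_sub {e f : R} (he : IsIdempotentElem e)
    (hf : IsIdempotentElem f) :
    e * f + (1 - e) * (1 - f) = 1 - (e * (e - f) - (e - f) * f) := by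
  simp only [mul_sub, sub_mul, one_mul, mul_one, he.eq, hf.eq]
  abel

theorem conjugateIdem_of_sub_mem {I : TwoSidedIdeal R} (hI : ∀ x ∈ I, IsNilpotent x)
    {e f : R} (he : IsIdempotentElem e) (hf : IsIdempotentElem f) (hef : e - f ∈ I) :
    ConjugateIdem e f := by
  have hmem : e * (e - f) - (e - f) * f ∈ I :=
    I.sub_mem (I.mul_mem_left e _ hef) (I.mul_mem_right _ f hef)
  obtain ⟨u, hu⟩ := (hI _ hmem).isUnit_one_sub
  refine conjugateIdem_of_mul_eq_mul u ?_
  rw [hu, ← he.intertwiner_eq_one_sub hf]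
  exact he.mul_intertwiner_eq_intertwiner_mul hf

end

/-- If the nilpotent elements of `R` form an ideal and `R` is nil clean, then `R` is
conjugate nil clean. -/
theorem conjNilClean_of_nilClean_of_nilpotents_ideal {R : Type*} [Ring R]
    (hN : ∃ I : TwoSidedIdeal R, ∀ x : R, x ∈ I ↔ IsNilpotent x)
    (hR : ∀ a : R, IsNilCleanElem a) :
    ∀ a : R, IsConjNilCleanElem a := by
  obtain ⟨I, hI⟩ := hN
  refine fun a ↦ ⟨hR a, fun e n f m he hn hae hf hm haf ↦ ?_⟩
  have hsub : e - f = m - n := by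
    rw [sub_eq_sub_iff_add_eq_add, ← hae, haf, add_comm]
  refine conjugateIdem_of_sub_mem (fun x hx ↦ (hI x).1 hx) he hf ?_
  rw [hsub]
  exact I.sub_mem ((hI m).2 hm) ((hI n).2 hn)
end
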